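/- arXiv:1707.01361 — 4 statements merged into one kernel-verified Lean document; each statement's English description precedes it below -/
import Mathlib

section
/- For every integer κ ≥ 1, the function B(x) = (1+x²) ∫_0^1 [ (1 + x²(1-u)²)(1 + x²u²) ]^{-1} (1-u)^{1/κ - 1} u^{1/κ - 1} du is finite for every x ≥ 0 and is bounded on [0, ∞). -/
open MeasureTheory

lemma aux_g_integrable {p : ℝ} (hp : -1 < p) :
    IntervalIntegrable (fun u : ℝ => (1 - u) ^ p * u ^ p) volume 0 1 := by
  have h1 : IntervalIntegrable (fun u : ℝ => (1 - u) ^ p * u ^ p) volume 0 (1/2) := by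
    apply (intervalIntegral.intervalIntegrable_rpow' hp (a := 0) (b := 1/2)).continuousOn_mul
    apply ContinuousOn.rpow_const (by fun_prop)
    intro u hu
    rw [Set.uIcc_of_le (by norm_num)] at hu
    left
    have := hu.2
    intro h; linarith [sub_eq_zero.mp h]
  have h2 : IntervalIntegrable (fun u : ℝ => (1 - u) ^ p * u ^ p) volume (1/2) 1 := by
    have hb : IntervalIntegrable (fun u : ℝ => (1 - u) ^ p) volume (1/2) 1 := by
      have := (intervalIntegral.intervalIntegrable_rpow' hp (a := 0) (b := 1/2)).comp_sub_left 1
      norm_num at this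
      exact this.symm
    apply hb.mul_continuousOn
    apply ContinuousOn.rpow_const (by fun_prop)
    intro u hu
    rw [Set.uIcc_of_le (by norm_num)] at hu
    left
    have := hu.1
    intro h; rw [h] at this; norm_num at this
  exact h1.trans h2

/-- For every integer `κ ≥ 1`, the function
`B(x) = (1+x²) ∫_0^1 [(1 + x²(1-u)²)(1 + x²u²)]⁻¹ (1-u)^{1/κ-1} u^{1/κ-1} du`
is finite for every `x ≥ 0` (the integrand is interval-integrable on `[0,1]`)
and `B` is bounded on `[0, ∞)`. -/
theorem stmt_5 (κ : ℕ) (hκ : 1 ≤ κ) :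
    (∀ x : ℝ, 0 ≤ x →
        IntervalIntegrable
          (fun u : ℝ =>
            ((1 + x ^ 2 * (1 - u) ^ 2) * (1 + x ^ 2 * u ^ 2))⁻¹ *
              (1 - u) ^ ((κ : ℝ)⁻¹ - 1) * u ^ ((κ : ℝ)⁻¹ - 1))
          volume 0 1) ∧
      ∃ C : ℝ, ∀ x : ℝ, 0 ≤ x →
        (1 + x ^ 2) *
            ∫ u in (0:ℝ)..1,
              ((1 + x ^ 2 * (1 - u) ^ 2) * (1 + x ^ 2 * u ^ 2))⁻¹ *
                (1 - u) ^ ((κ : ℝ)⁻¹ - 1) * u ^ ((κ : ℝ)⁻¹ - 1) ≤ C := by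
  set p : ℝ := (κ : ℝ)⁻¹ - 1 with hp_def
  have hκpos : (0 : ℝ) < (κ : ℝ)⁻¹ := by
    have : (0 : ℝ) < (κ : ℝ) := by exact_mod_cast hκ
    positivity
  have hp : -1 < p := by simp [hp_def]; linarith
  have hint : ∀ x : ℝ, 0 ≤ x →
      IntervalIntegrable
        (fun u : ℝ =>
          ((1 + x ^ 2 * (1 - u) ^ 2) * (1 + x ^ 2 * u ^ 2))⁻¹ *
            (1 - u) ^ p * u ^ p) volume 0 1 := by
    intro x hx
    simp only [mul_assoc]
    apply (aux_g_integrable hp).continuousOn_mul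
    apply Continuous.continuousOn
    apply Continuous.inv₀ (by fun_prop)
    intro u
    positivity
  refine ⟨hint, 2 * ∫ u in (0:ℝ)..1, (1 - u) ^ p * u ^ p, fun x hx => ?_⟩
  rw [← intervalIntegral.integral_const_mul, ← intervalIntegral.integral_const_mul]
  apply intervalIntegral.integral_mono_on (by norm_num)
    ((hint x hx).const_mul _) ((aux_g_integrable hp).const_mul 2)
  intro u hu
  have hu0 := hu.1
  have hu1 := hu.2
  have hA : (0:ℝ) ≤ (1 - u) ^ p := Real.rpow_nonneg (by linarith) _
  have hB : (0:ℝ) ≤ u ^ p := Real.rpow_nonneg hu0 _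
  have hDpos : (0:ℝ) < (1 + x ^ 2 * (1 - u) ^ 2) * (1 + x ^ 2 * u ^ 2) := by positivity
  have key : (1 + x ^ 2) * ((1 + x ^ 2 * (1 - u) ^ 2) * (1 + x ^ 2 * u ^ 2))⁻¹ ≤ 2 := by
    rw [mul_inv_le_iff₀ hDpos]
    nlinarith [sq_nonneg (x * (1 - 2*u)), sq_nonneg (x ^ 2 * (1 - u) * u), sq_nonneg x]
  calc (1 + x ^ 2) * (((1 + x ^ 2 * (1 - u) ^ 2) * (1 + x ^ 2 * u ^ 2))⁻¹ *
        (1 - u) ^ p * u ^ p)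
      = ((1 + x ^ 2) * ((1 + x ^ 2 * (1 - u) ^ 2) * (1 + x ^ 2 * u ^ 2))⁻¹) *
        ((1 - u) ^ p * u ^ p) := by ring
    _ ≤ 2 * ((1 - u) ^ p * u ^ p) :=
        mul_le_mul_of_nonneg_right key (mul_nonneg hA hB)
end

section
/- Let δ_D ≥ 1 and κ₁ ≥ 1 be integers, and let Q̃, R̃_D be complex polynomials with deg Q̃ = deg R̃_D, Q̃(im) ≠ 0 and R̃_D(im) ≠ 0 for all m ∈ ℝ, and a₀₁ ∈ ℂ*. Suppose S_d ⊂ ℂ* is an unbounded sector and ρ > 0 such that there exist M₁, M₂ > 0 with |τ - q_ℓ(m)| ≥ M₁(1 + |τ|) for all roots q_ℓ(m) (0 ≤ ℓ ≤ δ_D κ₁ - 1) of P̃_m(τ) = -Q̃(im)a₀₁ - R̃_D(im) κ₁^{δ_D} τ^{δ_D κ₁}, all m ∈ ℝ, all τ ∈ S_d ∪ closed disc D̄(0,ρ), and |τ - q_{ℓ₀}(m)| ≥ M₂|q_{ℓ₀}(m)| for some ℓ₀ and all such τ, m; and assume |Q̃(im)/R̃_D(im)| ≥ r for all m ∈ ℝ.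 Then there exists a constant C_P̃ > 0 (depending on M₁, M₂, a₀₁, κ₁, δ_D) such that |P̃_m(τ)| ≥ C_P̃ · r^{1/(δ_D κ₁)} |R̃_D(im)| (1 + |τ|^{κ₁})^{δ_D - 1/κ₁} for all τ ∈ S_d ∪ D̄(0,ρ) and all m ∈ ℝ. -/
open Complex

/-- The closed unbounded sector with bisecting direction `d` and (half-)aperture `θ`,
together with the closed disc `D̄(0,ρ)`. -/
def sectorUnionDisc (d θ ρ : ℝ) : Set ℂ :=
  {w : ℂ | w ≠ 0 ∧ |Complex.arg w - d| ≤ θ} ∪ Metric.closedBall 0 ρ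

/-- Lower bound for `P̃_m(τ) = -Q̃(im)a₀₁ - R̃_D(im)κ₁^{δ_D} τ^{δ_D κ₁}`: under the root
separation conditions `|τ - q(m)| ≥ M₁(1+|τ|)` for all roots `q(m)` of `P̃_m`, and
`|τ - q_{ℓ₀}(m)| ≥ M₂|q_{ℓ₀}(m)|` for some choice of root `q_{ℓ₀}(m)`, on
`S_d ∪ D̄(0,ρ)`, and assuming `|Q̃(im)/R̃_D(im)| ≥ r`, there is `C_P̃ > 0` depending only on
`M₁, M₂, a₀₁, κ₁, δ_D` with
`|P̃_m(τ)| ≥ C_P̃ r^{1/(δ_Dκ₁)} |R̃_D(im)| (1+|τ|^{κ₁})^{δ_D - 1/κ₁}`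
for all `τ ∈ S_d ∪ D̄(0,ρ)` and all `m ∈ ℝ`. -/
theorem stmt_8 (δD κ₁ : ℕ) (hδ : 1 ≤ δD) (hκ : 1 ≤ κ₁) (a₀₁ : ℂ) (ha : a₀₁ ≠ 0)
    (M₁ M₂ : ℝ) (hM₁ : 0 < M₁) (hM₂ : 0 < M₂) :
    ∃ C : ℝ, 0 < C ∧
      ∀ (Qt Rt : Polynomial ℂ) (d θ ρ r : ℝ), 0 < θ → 0 < ρ → 0 < r →
        Qt.degree = Rt.degree →
        (∀ m : ℝ, Qt.eval (Complex.I * m) ≠ 0) →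
        (∀ m : ℝ, Rt.eval (Complex.I * m) ≠ 0) →
        (∀ m : ℝ, r ≤ ‖Qt.eval (Complex.I * m) / Rt.eval (Complex.I * m)‖) →
        (∀ (m : ℝ) (z τ : ℂ),
          -Qt.eval (Complex.I * m) * a₀₁ -
              Rt.eval (Complex.I * m) * (κ₁ : ℂ) ^ δD * z ^ (δD * κ₁) = 0 →
          τ ∈ sectorUnionDisc d θ ρ → M₁ * (1 + ‖τ‖) ≤ ‖τ - z‖) →
        (∃ q : ℝ → ℂ,
          (∀ m : ℝ,
            -Qt.eval (Complex.I * m) * a₀₁ -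
              Rt.eval (Complex.I * m) * (κ₁ : ℂ) ^ δD * q m ^ (δD * κ₁) = 0) ∧
          ∀ (m : ℝ) (τ : ℂ), τ ∈ sectorUnionDisc d θ ρ → M₂ * ‖q m‖ ≤ ‖τ - q m‖) →
        ∀ (τ : ℂ) (m : ℝ), τ ∈ sectorUnionDisc d θ ρ →
          C * r ^ (((δD : ℝ) * κ₁)⁻¹) * ‖Rt.eval (Complex.I * m)‖ *
              (1 + ‖τ‖ ^ κ₁) ^ ((δD : ℝ) - (κ₁ : ℝ)⁻¹) ≤
            ‖-Qt.eval (Complex.I * m) * a₀₁ -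
                Rt.eval (Complex.I * m) * (κ₁ : ℂ) ^ δD * τ ^ (δD * κ₁)‖ := by
  set N : ℕ := δD * κ₁ with hNdef
  have hN : 1 ≤ N := Nat.one_le_iff_ne_zero.mpr (by positivity)
  have hNpos : 0 < N := hN
  clear_value N
  have hκR : (0:ℝ) < (κ₁:ℝ) := by exact_mod_cast hκ
  have hK : (0:ℝ) < (κ₁:ℝ) ^ δD := by positivity
  have haN : (0:ℝ) < ‖a₀₁‖ := norm_pos_iff.mpr ha
  refine ⟨M₂ * M₁ ^ (N - 1) * (κ₁:ℝ) ^ δD * (‖a₀₁‖ / (κ₁:ℝ) ^ δD) ^ ((N:ℝ)⁻¹), by positivity,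
    ?_⟩
  intro Qt Rt d θ ρ r hθ hρ hr hdeg hQ hR hrQR hroots hq τ m hτ
  obtain ⟨q, hqroot, hqsep⟩ := hq
  set A : ℝ := ‖Qt.eval (Complex.I * m)‖ with hAdef
  set B : ℝ := ‖Rt.eval (Complex.I * m)‖ with hBdef
  have hA : 0 < A := norm_pos_iff.mpr (hQ m)
  have hB : 0 < B := norm_pos_iff.mpr (hR m)
  set t : ℝ := ‖τ‖ with htdef
  have ht : 0 ≤ t := norm_nonneg _
  -- the key identity: P(τ) = -(R κ^δD)(τ^N - q^N)
  have hkey : -Qt.eval (Complex.I * m) * a₀₁ -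
      Rt.eval (Complex.I * m) * (κ₁ : ℂ) ^ δD * τ ^ N =
      -(Rt.eval (Complex.I * m) * (κ₁ : ℂ) ^ δD) * (τ ^ N - q m ^ N) := by
    linear_combination hqroot m
  -- factorization
  have hNpos' : 0 < N := hNpos
  set ζ : ℂ := Complex.exp (2 * Real.pi * Complex.I / N) with hζdef
  have hζ : IsPrimitiveRoot ζ N := Complex.isPrimitiveRoot_exp N hNpos.ne'
  have hfac : τ ^ N - q m ^ N = ∏ i ∈ Finset.range N, (τ - ζ ^ i * q m) := by
    have h := _root_.X_pow_sub_C_eq_prod hζ hNpos (rfl : q m ^ N = q m ^ N)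
    have := congrArg (Polynomial.eval τ) h
    simpa [Polynomial.eval_prod] using this
  -- each ζ^i * q m is a root of P
  have hrooti : ∀ i : ℕ, M₁ * (1 + t) ≤ ‖τ - ζ ^ i * q m‖ := by
    intro i
    refine hroots m (ζ ^ i * q m) τ ?_ hτ
    have hζN : (ζ ^ i) ^ N = 1 := by
      rw [← pow_mul, mul_comm, pow_mul, hζ.pow_eq_one, one_pow]
    have : (ζ ^ i * q m) ^ N = q m ^ N := by
      rw [mul_pow, hζN, one_mul]
    rw [this]
    exact hqroot m
  have hsep : M₂ * ‖q m‖ ≤ ‖τ - q m‖ := hqsep m τ hτ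
  -- product lower bound
  have hM₁t : (0:ℝ) ≤ M₁ * (1 + t) := by positivity
  have hprod : M₂ * ‖q m‖ * (M₁ * (1 + t)) ^ (N - 1) ≤
      ∏ i ∈ Finset.range N, ‖τ - ζ ^ i * q m‖ := by
    obtain ⟨n, rfl⟩ : ∃ n, N = n + 1 := ⟨N - 1, by omega⟩
    rw [Finset.prod_range_succ']
    have h1 : (M₁ * (1 + t)) ^ n ≤ ∏ i ∈ Finset.range n, ‖τ - ζ ^ (i + 1) * q m‖ := by
      calc (M₁ * (1 + t)) ^ n = ∏ _i ∈ Finset.range n, (M₁ * (1 + t)) := by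
            rw [Finset.prod_const, Finset.card_range]
        _ ≤ _ := Finset.prod_le_prod (fun i _ => hM₁t) (fun i _ => hrooti (i + 1))
    have h0 : M₂ * ‖q m‖ ≤ ‖τ - ζ ^ 0 * q m‖ := by
      simpa using hsep
    calc M₂ * ‖q m‖ * (M₁ * (1 + t)) ^ (n + 1 - 1)
        ≤ ‖τ - ζ ^ 0 * q m‖ * ∏ i ∈ Finset.range n, ‖τ - ζ ^ (i + 1) * q m‖ := by
          simp only [Nat.add_sub_cancel]
          exact mul_le_mul h0 h1 (by positivity) (norm_nonneg _)
      _ = (∏ i ∈ Finset.range n, ‖τ - ζ ^ (i + 1) * q m‖) * ‖τ - ζ ^ 0 * q m‖ := by ring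
  -- norm of q m
  have hqeq : A * ‖a₀₁‖ = B * ((κ₁:ℝ) ^ δD) * ‖q m‖ ^ N := by
    have h := hqroot m
    have h2 : Qt.eval (Complex.I * m) * a₀₁ =
        -(Rt.eval (Complex.I * m) * (κ₁ : ℂ) ^ δD * q m ^ N) := by
      linear_combination -h
    calc A * ‖a₀₁‖ = ‖Qt.eval (Complex.I * m) * a₀₁‖ := (norm_mul _ _).symm
      _ = ‖Rt.eval (Complex.I * m) * (κ₁ : ℂ) ^ δD * q m ^ N‖ := by rw [h2, norm_neg]
      _ = B * ((κ₁:ℝ) ^ δD) * ‖q m‖ ^ N := by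
          simp [norm_mul, norm_pow, hBdef]
  have hrB : r * B ≤ A := by
    have h := hrQR m
    rw [norm_div] at h
    calc r * B ≤ (A / B) * B := by
          exact mul_le_mul_of_nonneg_right h hB.le
      _ = A := by field_simp
  have hqN : r * (‖a₀₁‖ / (κ₁:ℝ) ^ δD) ≤ ‖q m‖ ^ N := by
    have h1 : r * B * ‖a₀₁‖ ≤ B * ((κ₁:ℝ) ^ δD) * ‖q m‖ ^ N := by
      rw [← hqeq]
      exact mul_le_mul_of_nonneg_right hrB haN.le
    have h2 : r * (‖a₀₁‖ / (κ₁:ℝ) ^ δD) = r * B * ‖a₀₁‖ / (B * (κ₁:ℝ) ^ δD) := by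
      field_simp
    rw [h2, div_le_iff₀ (by positivity)]
    nlinarith [h1]
  have hqlb : (r * (‖a₀₁‖ / (κ₁:ℝ) ^ δD)) ^ ((N:ℝ)⁻¹) ≤ ‖q m‖ := by
    have := Real.rpow_le_rpow (by positivity) hqN (by positivity : (0:ℝ) ≤ (N:ℝ)⁻¹)
    rwa [Real.pow_rpow_inv_natCast (norm_nonneg _) hNpos.ne'] at this
  -- exponent comparison
  have he0 : (0:ℝ) ≤ (δD:ℝ) - (κ₁:ℝ)⁻¹ := by
    have h1 : (κ₁:ℝ)⁻¹ ≤ 1 := by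
      rw [inv_le_one_iff₀]; right; exact_mod_cast hκ
    have h2 : (1:ℝ) ≤ (δD:ℝ) := by exact_mod_cast hδ
    linarith
  have hexp : (1 + t ^ κ₁) ^ ((δD:ℝ) - (κ₁:ℝ)⁻¹) ≤ (1 + t) ^ (N - 1) := by
    have hb : 1 + t ^ κ₁ ≤ (1 + t) ^ κ₁ := by
      have := pow_add_pow_le (zero_le_one (α := ℝ)) ht (Nat.one_le_iff_ne_zero.mp hκ)
      simpa using this
    have h1 : (1 + t ^ κ₁) ^ ((δD:ℝ) - (κ₁:ℝ)⁻¹) ≤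
        ((1 + t) ^ κ₁ : ℝ) ^ ((δD:ℝ) - (κ₁:ℝ)⁻¹) :=
      Real.rpow_le_rpow (by positivity) hb he0
    refine h1.trans_eq ?_
    rw [← Real.rpow_natCast (1 + t) κ₁, ← Real.rpow_natCast (1 + t) (N - 1),
      ← Real.rpow_mul (by positivity)]
    congr 1
    have hc : ((N - 1 : ℕ) : ℝ) = (δD:ℝ) * (κ₁:ℝ) - 1 := by
      have : ((N:ℕ):ℝ) = (δD:ℝ) * (κ₁:ℝ) := by rw [hNdef]; push_cast; ring
      rw [Nat.cast_sub hN, this]; norm_num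
    rw [hc]
    field_simp
  -- rewrite the r exponent
  have hrex : r ^ (((δD : ℝ) * κ₁)⁻¹) = r ^ ((N:ℝ)⁻¹) := by
    congr 1
    rw [hNdef]; push_cast; ring
  -- final assembly
  have hqlb' : r ^ ((N:ℝ)⁻¹) * (‖a₀₁‖ / (κ₁:ℝ) ^ δD) ^ ((N:ℝ)⁻¹) ≤ ‖q m‖ := by
    rwa [← Real.mul_rpow hr.le (by positivity)]
  have hPnorm : ‖-Qt.eval (Complex.I * m) * a₀₁ -
      Rt.eval (Complex.I * m) * (κ₁ : ℂ) ^ δD * τ ^ N‖ =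
      B * ((κ₁:ℝ) ^ δD) * ∏ i ∈ Finset.range N, ‖τ - ζ ^ i * q m‖ := by
    rw [hkey, hfac, norm_mul, norm_neg, norm_mul, norm_prod]
    simp [hBdef, mul_assoc]
  rw [hPnorm, hrex]
  have hmid : M₂ * (r ^ ((N:ℝ)⁻¹) * (‖a₀₁‖ / (κ₁:ℝ) ^ δD) ^ ((N:ℝ)⁻¹)) *
      (M₁ ^ (N - 1) * (1 + t ^ κ₁) ^ ((δD:ℝ) - (κ₁:ℝ)⁻¹)) ≤
      ∏ i ∈ Finset.range N, ‖τ - ζ ^ i * q m‖ := by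
    refine le_trans ?_ hprod
    have h1 : M₁ ^ (N - 1) * (1 + t ^ κ₁) ^ ((δD:ℝ) - (κ₁:ℝ)⁻¹) ≤
        (M₁ * (1 + t)) ^ (N - 1) := by
      rw [mul_pow]
      exact mul_le_mul_of_nonneg_left hexp (by positivity)
    have h2 : M₂ * (r ^ ((N:ℝ)⁻¹) * (‖a₀₁‖ / (κ₁:ℝ) ^ δD) ^ ((N:ℝ)⁻¹)) ≤ M₂ * ‖q m‖ :=
      mul_le_mul_of_nonneg_left hqlb' hM₂.le
    exact mul_le_mul h2 h1 (by positivity) (by positivity)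
  calc M₂ * M₁ ^ (N - 1) * (κ₁:ℝ) ^ δD * (‖a₀₁‖ / (κ₁:ℝ) ^ δD) ^ ((N:ℝ)⁻¹) *
        r ^ ((N:ℝ)⁻¹) * B * (1 + t ^ κ₁) ^ ((δD:ℝ) - (κ₁:ℝ)⁻¹)
      = B * ((κ₁:ℝ) ^ δD) *
        (M₂ * (r ^ ((N:ℝ)⁻¹) * (‖a₀₁‖ / (κ₁:ℝ) ^ δD) ^ ((N:ℝ)⁻¹)) *
          (M₁ ^ (N - 1) * (1 + t ^ κ₁) ^ ((δD:ℝ) - (κ₁:ℝ)⁻¹))) := by ring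
    _ ≤ B * ((κ₁:ℝ) ^ δD) * ∏ i ∈ Finset.range N, ‖τ - ζ ^ i * q m‖ :=
        mul_le_mul_of_nonneg_left hmid (by positivity)
end

section
/- Let ν, β > 0, μ > 1, κ ≥ 1 an integer, χ, α ≥ 0, and ε ∈ ℂ*. Let γ₁ ≥ 0, γ₂ ≥ 1 be integers, R̃ ∈ ℂ[X] with R̃(im) ≠ 0 for all m ∈ ℝ, B̃ ∈ E_{(β,μ)}, and let a(τ,m) be continuous on (D̄(0,ρ) ∪ S_d) × ℝ, holomorphic in τ on D(0,ρ) ∪ S_d, with |a(τ,m)| ≤ 1/((1+|τ|^κ)^{γ₁} |R̃(im)|). Then the function ε^{-χγ₂} τ^{γ₂} B̃(m) a(τ,m) belongs to F^d_{(ν,β,μ,χ,α,κ,ε)} and ‖ε^{-χγ₂} τ^{γ₂} B̃(m) a(τ,m)‖_{(ν,β,μ,χ,α,κ,ε)} ≤ C₂ (‖B̃‖_{(β,μ)} / inf_m |R̃(im)|) |ε|^{γ₂ α}, with C₂ = sup_{x≥0} (1+x^{2κ}) x^{γ₂-1} e^{-νx^κ}. -/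
open Complex

/-- `s^N / N! ≤ exp s` for `s ≥ 0`. -/
lemma pow_div_fact_le_exp (s : ℝ) (hs : 0 ≤ s) (N : ℕ) :
    s ^ N / N.factorial ≤ Real.exp s := by
  have h := Real.sum_le_exp_of_nonneg hs (N + 1)
  refine le_trans ?_ h
  calc s ^ N / N.factorial
      = ∑ i ∈ Finset.range (N+1), if i = N then s ^ i / i.factorial else 0 := by
        simp
    _ ≤ ∑ i ∈ Finset.range (N+1), s ^ i / i.factorial := by
        apply Finset.sum_le_sum
        intro i _
        split
        · exact le_refl _
        · positivity

lemma weight_bdd (ν : ℝ) (hν : 0 < ν) (κ γ₂ : ℕ) (hκ : 1 ≤ κ) (hγ₂ : 1 ≤ γ₂) :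
    BddAbove ((fun x : ℝ => (1 + x ^ (2 * κ)) * x ^ (γ₂ - 1) * Real.exp (-(ν * x ^ κ))) ''
      Set.Ici (0 : ℝ)) := by
  set N := 2 * κ + γ₂ with hN
  refine ⟨2 + 2 * (N.factorial : ℝ) / ν ^ N, ?_⟩
  rintro y ⟨x, hx, rfl⟩
  simp only [Set.mem_Ici] at hx
  have hfac : (0:ℝ) < 2 * (N.factorial : ℝ) / ν ^ N := by positivity
  rcases le_or_gt x 1 with hx1 | hx1
  · have h1 : x ^ (2 * κ) ≤ 1 := pow_le_one₀ hx hx1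
    have h2 : x ^ (γ₂ - 1) ≤ 1 := pow_le_one₀ hx hx1
    have h3 : Real.exp (-(ν * x ^ κ)) ≤ 1 := by
      rw [Real.exp_le_one_iff]
      have : 0 ≤ ν * x ^ κ := by positivity
      linarith
    have h4 : (1 + x ^ (2 * κ)) * x ^ (γ₂ - 1) * Real.exp (-(ν * x ^ κ)) ≤ (1 + 1) * 1 * 1 := by
      have e0 : (0:ℝ) ≤ Real.exp (-(ν * x ^ κ)) := (Real.exp_pos _).le
      have p0 : (0:ℝ) ≤ x ^ (γ₂ - 1) := by positivity
      exact mul_le_mul (mul_le_mul (by linarith) h2 p0 (by norm_num)) h3 e0 (by norm_num)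
    nlinarith
  · have hx1' : (1:ℝ) ≤ x := hx1.le
    have hx0 : (0:ℝ) < x := lt_of_lt_of_le one_pos hx1'
    have hs : (0:ℝ) < ν * x ^ κ := by positivity
    have hAB : 2 * κ + (γ₂ - 1) ≤ κ * N := by
      calc 2 * κ + (γ₂ - 1) ≤ N := by omega
        _ ≤ κ * N := Nat.le_mul_of_pos_left _ hκ
    have hexp : Real.exp (-(ν * x ^ κ)) ≤ (N.factorial : ℝ) / (ν * x ^ κ) ^ N := by
      rw [Real.exp_neg]
      have h1 : (ν * x ^ κ) ^ N / (N.factorial : ℝ) ≤ Real.exp (ν * x ^ κ) :=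
        pow_div_fact_le_exp _ hs.le N
      have hpos : (0:ℝ) < (ν * x ^ κ) ^ N / (N.factorial : ℝ) := by positivity
      calc (Real.exp (ν * x ^ κ))⁻¹ ≤ ((ν * x ^ κ) ^ N / (N.factorial : ℝ))⁻¹ := by
            exact inv_anti₀ hpos h1
        _ = (N.factorial : ℝ) / (ν * x ^ κ) ^ N := by rw [inv_div]
    calc (1 + x ^ (2 * κ)) * x ^ (γ₂ - 1) * Real.exp (-(ν * x ^ κ))
        ≤ (2 * x ^ (2 * κ)) * x ^ (γ₂ - 1) * ((N.factorial : ℝ) / (ν * x ^ κ) ^ N) := by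
          have h1 : 1 + x ^ (2 * κ) ≤ 2 * x ^ (2 * κ) := by
            have := one_le_pow₀ (n := 2 * κ) hx1'
            linarith
          gcongr
      _ = 2 * (N.factorial : ℝ) / ν ^ N * (x ^ (2 * κ + (γ₂ - 1)) / x ^ (κ * N)) := by
          rw [mul_pow, ← pow_mul, pow_add]
          field_simp
          ring
      _ ≤ 2 * (N.factorial : ℝ) / ν ^ N * 1 := by
          gcongr
          rw [div_le_one (by positivity)]
          exact pow_le_pow_right₀ hx1' hAB
      _ = 2 * (N.factorial : ℝ) / ν ^ N := mul_one _
      _ ≤ 2 + 2 * (N.factorial : ℝ) / ν ^ N := by linarith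


/-- The closed unbounded sector `S_d` with bisecting direction `d` and aperture `θ`. -/
def uSector (d θ : ℝ) : Set ℂ := {w : ℂ | w ≠ 0 ∧ |Complex.arg w - d| ≤ θ}

/-- Lemma 1 of the paper: with `ν, ρ, β > 0`, `μ > 1`, `κ ≥ 1`, integers `χ, α ≥ 0`,
`ε ∈ ℂ*`, integers `γ₁ ≥ 0`, `γ₂ ≥ 1`, `R̃ ∈ ℂ[X]` with `R̃(im) ≠ 0` and
`inf_m |R̃(im)| ≥ rinf > 0`, `B̃ ∈ E_{(β,μ)}` with norm bounded by `NB`, and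
`a_{γ₁,κ}(τ,m)` continuous on `(D̄(0,ρ) ∪ S_d) × ℝ`, holomorphic in `τ`, with
`|a(τ,m)| ≤ ((1+|τ|^κ)^{γ₁}|R̃(im)|)⁻¹`, the function
`ε^{-χγ₂} τ^{γ₂} B̃(m) a(τ,m)` belongs to `F^d_{(ν,β,μ,χ,α,κ,ε)}` with
`‖ε^{-χγ₂} τ^{γ₂} B̃(m) a(τ,m)‖_{(ν,β,μ,χ,α,κ,ε)} ≤ C₂ (NB / rinf) |ε|^{γ₂α}`, where
`C₂ = sup_{x≥0} (1+x^{2κ}) x^{γ₂-1} e^{-νx^κ}` (stated pointwise on the weighted values,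
which is equivalent to the norm bound). -/
theorem stmt_14 (ν β μ ρ : ℝ) (hν : 0 < ν) (hβ : 0 < β) (hμ : 1 < μ) (hρ : 0 < ρ)
    (κ : ℕ) (hκ : 1 ≤ κ) (χ α : ℕ) (ε : ℂ) (hε : ε ≠ 0)
    (γ₁ γ₂ : ℕ) (hγ₂ : 1 ≤ γ₂) (d θ : ℝ) (hθ : 0 < θ)
    (Rt : Polynomial ℂ) (hRne : ∀ m : ℝ, Rt.eval (Complex.I * m) ≠ 0)
    (rinf : ℝ) (hrinf : 0 < rinf) (hrle : ∀ m : ℝ, rinf ≤ ‖Rt.eval (Complex.I * m)‖)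
    (Bt : ℝ → ℂ) (NB : ℝ)
    (hNB : ∀ m : ℝ, (1 + |m|) ^ μ * Real.exp (β * |m|) * ‖Bt m‖ ≤ NB)
    (a : ℂ → ℝ → ℂ)
    (hacont : ∀ m : ℝ, ContinuousOn (fun τ => a τ m)
      (Metric.closedBall 0 ρ ∪ uSector d θ))
    (haholo : ∀ m : ℝ, DifferentiableOn ℂ (fun τ => a τ m)
      (Metric.ball 0 ρ ∪ uSector d θ))
    (habd : ∀ (τ : ℂ) (m : ℝ), τ ∈ Metric.closedBall 0 ρ ∪ uSector d θ →
      ‖a τ m‖ ≤ ((1 + ‖τ‖ ^ κ) ^ γ₁ * ‖Rt.eval (Complex.I * m)‖)⁻¹) :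
    ∀ (τ : ℂ) (m : ℝ), τ ∈ Metric.closedBall 0 ρ ∪ uSector d θ →
      (1 + |m|) ^ μ * Real.exp (β * |m|) *
          ((1 + ‖τ / ε ^ (χ + α)‖ ^ (2 * κ)) / ‖τ / ε ^ (χ + α)‖) *
          Real.exp (-(ν * ‖τ / ε ^ (χ + α)‖ ^ κ)) *
          ‖ε ^ (-((χ : ℤ) * (γ₂ : ℤ))) * τ ^ γ₂ * Bt m * a τ m‖ ≤
        sSup ((fun x : ℝ => (1 + x ^ (2 * κ)) * x ^ (γ₂ - 1) * Real.exp (-(ν * x ^ κ))) ''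
            Set.Ici (0 : ℝ)) *
          (NB / rinf) * ‖ε‖ ^ (γ₂ * α) := by
  have hbdd := weight_bdd ν hν κ γ₂ hκ hγ₂
  set C₂ := sSup ((fun x : ℝ => (1 + x ^ (2 * κ)) * x ^ (γ₂ - 1) * Real.exp (-(ν * x ^ κ))) ''
      Set.Ici (0 : ℝ)) with hC₂def
  have hC2 : ∀ s : ℝ, 0 ≤ s →
      (1 + s ^ (2 * κ)) * s ^ (γ₂ - 1) * Real.exp (-(ν * s ^ κ)) ≤ C₂ :=
    fun s hs => le_csSup hbdd ⟨s, hs, rfl⟩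
  have hC2nn : 0 ≤ C₂ := le_trans (by positivity) (hC2 1 zero_le_one)
  have hNB0 : 0 ≤ NB := le_trans (by positivity) (hNB 0)
  have hεp : ε ^ (χ + α) ≠ 0 := pow_ne_zero _ hε
  have he : (0:ℝ) < ‖ε‖ := norm_pos_iff.mpr hε
  intro τ m hτ
  have hnorm4 : ‖ε ^ (-((χ : ℤ) * (γ₂ : ℤ))) * τ ^ γ₂ * Bt m * a τ m‖
      = (‖ε‖ ^ (χ * γ₂))⁻¹ * ‖τ‖ ^ γ₂ * ‖Bt m‖ * ‖a τ m‖ := by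
    rw [norm_mul, norm_mul, norm_mul, norm_zpow, norm_pow]
    congr 3
    rw [show -((χ : ℤ) * (γ₂ : ℤ)) = -((χ * γ₂ : ℕ) : ℤ) by push_cast; ring,
      zpow_neg, zpow_natCast]
  by_cases hτ0 : τ = 0
  · subst hτ0
    rw [hnorm4]
    simp only [norm_zero, zero_pow (show γ₂ ≠ 0 by omega), mul_zero, zero_mul]
    exact mul_nonneg (mul_nonneg hC2nn (div_nonneg hNB0 hrinf.le)) (by positivity)
  · have hτn : (0:ℝ) < ‖τ‖ := norm_pos_iff.mpr hτ0
    set x := ‖τ / ε ^ (χ + α)‖ with hxd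
    have hx : 0 < x := by rw [hxd]; exact norm_pos_iff.mpr (div_ne_zero hτ0 hεp)
    have htx : ‖τ‖ = x * ‖ε‖ ^ (χ + α) := by
      have hxe : x = ‖τ‖ / ‖ε‖ ^ (χ + α) := by rw [hxd, norm_div, norm_pow]
      rw [hxe, div_mul_cancel₀ _ (pow_ne_zero _ he.ne')]
    have ha : ‖a τ m‖ ≤ rinf⁻¹ := by
      have h1 : (1:ℝ) ≤ (1 + ‖τ‖ ^ κ) ^ γ₁ :=
        one_le_pow₀ (le_add_of_nonneg_right (by positivity))
      have h2 : rinf ≤ (1 + ‖τ‖ ^ κ) ^ γ₁ * ‖Rt.eval (Complex.I * m)‖ := by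
        calc rinf = 1 * rinf := (one_mul _).symm
          _ ≤ (1 + ‖τ‖ ^ κ) ^ γ₁ * ‖Rt.eval (Complex.I * m)‖ :=
            mul_le_mul h1 (hrle m) hrinf.le (by positivity)
      exact (habd τ m hτ).trans (inv_anti₀ hrinf h2)
    obtain ⟨g, rfl⟩ : ∃ g, γ₂ = g + 1 := ⟨γ₂ - 1, by omega⟩
    have key : (1 + |m|) ^ μ * Real.exp (β * |m|) * ((1 + x ^ (2 * κ)) / x) *
        Real.exp (-(ν * x ^ κ)) *
        ((‖ε‖ ^ (χ * (g + 1)))⁻¹ * ‖τ‖ ^ (g + 1) * ‖Bt m‖ * ‖a τ m‖)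
        = ((1 + |m|) ^ μ * Real.exp (β * |m|) * ‖Bt m‖) * ‖a τ m‖ *
          ((1 + x ^ (2 * κ)) * x ^ (g + 1 - 1) * Real.exp (-(ν * x ^ κ))) *
          ‖ε‖ ^ ((g + 1) * α) := by
      have hA : (‖ε‖ ^ (χ * (g + 1)))⁻¹ * ‖τ‖ ^ (g + 1)
          = x ^ (g + 1) * ‖ε‖ ^ ((g + 1) * α) := by
        rw [htx, mul_pow, ← pow_mul,
          show (χ + α) * (g + 1) = χ * (g + 1) + (g + 1) * α by ring, pow_add]
        have hE : (‖ε‖ ^ (χ * (g + 1))) ≠ 0 := by positivity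
        rw [pow_add ‖ε‖ (χ * (g + 1)) ((g + 1) * α),
          show (‖ε‖ ^ (χ * (g + 1)))⁻¹ *
              (x ^ g * x ^ 1 * (‖ε‖ ^ (χ * (g + 1)) * ‖ε‖ ^ ((g + 1) * α)))
            = (‖ε‖ ^ (χ * (g + 1)))⁻¹ * ‖ε‖ ^ (χ * (g + 1)) *
              (x ^ g * x ^ 1 * ‖ε‖ ^ ((g + 1) * α)) from by ring,
          inv_mul_cancel₀ hE, one_mul]
      rw [hA, pow_succ]
      simp only [Nat.add_sub_cancel]
      field_simp
    rw [hnorm4, key]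
    calc ((1 + |m|) ^ μ * Real.exp (β * |m|) * ‖Bt m‖) * ‖a τ m‖ *
          ((1 + x ^ (2 * κ)) * x ^ (g + 1 - 1) * Real.exp (-(ν * x ^ κ))) *
          ‖ε‖ ^ ((g + 1) * α)
        ≤ NB * rinf⁻¹ * C₂ * ‖ε‖ ^ ((g + 1) * α) := by
          gcongr
          · exact hNB m
          · exact hC2 x hx.le
      _ = C₂ * (NB / rinf) * ‖ε‖ ^ ((g + 1) * α) := by
          rw [div_eq_mul_inv]; ring
end

section
/- Suppose nonnegative integers satisfy k₀₁ = d_ℓ - δ_ℓ - δ_ℓκ₁ - d_{ℓ,0} and 2k₀₂ - k₀₃ = d_ℓ - δ_ℓ - δ_ℓκ₂ - d̃_{ℓ,0} for 1 ≤ ℓ ≤ D, with d_{ℓ,0}, d̃_{ℓ,0} ≥ 1 for ℓ < D and d_{D,0} = d̃_{D,0} = 0, and suppose k₀₃ + k₀₁ > 2k₀₂. Then δ_D > 0, κ₂ > κ₁, and d_{ℓ,0} - d̃_{ℓ,0} < δ_ℓ(κ₂ - κ₁) for every 1 ≤ ℓ ≤ D - 1; moreover k₀₁ - (2k₀₂ -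 k₀₃) = δ_D(κ₂ - κ₁). -/
/-- Suppose nonnegative integers satisfy `k₀₁ = d_ℓ - δ_ℓ - δ_ℓκ₁ - d_{ℓ,0}` and
`2k₀₂ - k₀₃ = d_ℓ - δ_ℓ - δ_ℓκ₂ - d̃_{ℓ,0}` for `1 ≤ ℓ ≤ D`, with
`d_{ℓ,0}, d̃_{ℓ,0} ≥ 1` for `ℓ < D` and `d_{D,0} = d̃_{D,0} = 0`, the `δ_ℓ` increasing
with `δ₁ ≥ 1`, and `k₀₃ + k₀₁ > 2k₀₂`.  Then `δ_D > 0`, `κ₂ > κ₁`,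
`d_{ℓ,0} - d̃_{ℓ,0} < δ_ℓ(κ₂-κ₁)` for `1 ≤ ℓ ≤ D-1`, and
`k₀₁ - (2k₀₂ - k₀₃) = δ_D(κ₂-κ₁)`. -/
theorem stmt_16 (D : ℕ) (hD : 2 ≤ D) (κ₁ κ₂ k₀₁ k₀₂ k₀₃ : ℕ)
    (hκ₁ : 1 ≤ κ₁) (hκ₂ : 1 ≤ κ₂)
    (d δ d0 dt0 : ℕ → ℕ)
    (hδ : ∀ ℓ, 1 ≤ ℓ → ℓ ≤ D - 1 → 1 ≤ δ ℓ ∧ δ ℓ < δ (ℓ + 1))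
    (hrel1 : ∀ ℓ, 1 ≤ ℓ → ℓ ≤ D →
      (k₀₁ : ℤ) = (d ℓ : ℤ) - (δ ℓ : ℤ) - (δ ℓ : ℤ) * (κ₁ : ℤ) - (d0 ℓ : ℤ))
    (hrel2 : ∀ ℓ, 1 ≤ ℓ → ℓ ≤ D →
      2 * (k₀₂ : ℤ) - (k₀₃ : ℤ) =
        (d ℓ : ℤ) - (δ ℓ : ℤ) - (δ ℓ : ℤ) * (κ₂ : ℤ) - (dt0 ℓ : ℤ))
    (hd0 : ∀ ℓ, 1 ≤ ℓ → ℓ ≤ D - 1 → 1 ≤ d0 ℓ ∧ 1 ≤ dt0 ℓ)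
    (hD0 : d0 D = 0) (hDt0 : dt0 D = 0)
    (hk : 2 * k₀₂ < k₀₃ + k₀₁) :
    0 < δ D ∧ κ₁ < κ₂ ∧
      (∀ ℓ, 1 ≤ ℓ → ℓ ≤ D - 1 →
        (d0 ℓ : ℤ) - (dt0 ℓ : ℤ) < (δ ℓ : ℤ) * ((κ₂ : ℤ) - (κ₁ : ℤ))) ∧
      (k₀₁ : ℤ) - (2 * (k₀₂ : ℤ) - (k₀₃ : ℤ)) = (δ D : ℤ) * ((κ₂ : ℤ) - (κ₁ : ℤ)) := by

  have h1D := hrel1 D (by omega) le_rfl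
  have h2D := hrel2 D (by omega) le_rfl
  have hX : (0:ℤ) < (k₀₁ : ℤ) - (2 * (k₀₂ : ℤ) - (k₀₃ : ℤ)) := by
    push_cast; omega
  have hmain : (k₀₁ : ℤ) - (2 * (k₀₂ : ℤ) - (k₀₃ : ℤ)) = (δ D : ℤ) * ((κ₂ : ℤ) - (κ₁ : ℤ)) := by
    rw [hD0] at h1D; rw [hDt0] at h2D
    have : (k₀₁ : ℤ) - (2 * (k₀₂ : ℤ) - (k₀₃ : ℤ)) = (δ D : ℤ) * (κ₂ : ℤ) - (δ D : ℤ) * (κ₁ : ℤ) := by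
      omega
    linarith [this]
  have hpos : (0:ℤ) < (δ D : ℤ) * ((κ₂ : ℤ) - (κ₁ : ℤ)) := hmain ▸ hX
  have hδD : 0 < δ D := by
    by_contra h
    have : δ D = 0 := by omega
    rw [this] at hpos; simp at hpos
  have hκ : κ₁ < κ₂ := by
    by_contra h
    have : (κ₂ : ℤ) - (κ₁ : ℤ) ≤ 0 := by push_cast; omega
    nlinarith [hpos]
  refine ⟨hδD, hκ, ?_, hmain⟩
  intro ℓ h1 h2
  have r1 := hrel1 ℓ h1 (by omega)
  have r2 := hrel2 ℓ h1 (by omega)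
  have : (k₀₁ : ℤ) - (2 * (k₀₂ : ℤ) - (k₀₃ : ℤ))
      = (δ ℓ : ℤ) * (κ₂ : ℤ) - (δ ℓ : ℤ) * (κ₁ : ℤ) + (dt0 ℓ : ℤ) - (d0 ℓ : ℤ) := by omega
  have hexp : (δ ℓ : ℤ) * ((κ₂ : ℤ) - (κ₁ : ℤ)) = (δ ℓ : ℤ) * (κ₂ : ℤ) - (δ ℓ : ℤ) * (κ₁ : ℤ) := by ring
  rw [hexp]
  linarith [hX, this]
end
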